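/- arXiv:1709.09551 — 7 statements merged into one kernel-verified Lean document; each statement's English description precedes it below -/
import Mathlib

section
/- Let 0 < τ < T, let λ > 0, let Z be uniformly distributed on [0, τ], and let S be exponentially distributed with rate λ, with Z and S independent. Then the probability that Z + S lands in some ON interval [nT, nT + τ), summed over all integers n ≥ 0, equals g := ( e^{−λτ} + λτ − 1 + e^{−λτ}(e^{λτ} − 1)²/(e^{λT} − 1) ) / (λτ); that is, Σ_{n=0}^{∞} P( nT ≤ Z + S < nT + τ ) = g. -/
open MeasureTheory ProbabilityTheory Set Real

/-!
Conditionally on `Z = z`, the `n`-th event is `S ∈ [nT - z, nT + τ - z)`, whose probability is a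
difference of values of the exponential survival function `x ↦ e^{-λ max(x, 0)}`. Averaging over
`z ∈ [0, τ]` gives `τ - (1 - e^{-λτ})/λ` for `n = 0` and `e^{-λnT} (1 - e^{-λτ})(e^{λτ} - 1)/λ`
for `n ≥ 1` (then `nT ≥ τ`, so the window never straddles `0`); the geometric series in
`e^{-λT}` sums to the closed form.
-/

noncomputable def expSurvival (lam x : ℝ) : ℝ := exp (-(lam * max x 0))

@[fun_prop]
theorem continuous_expSurvival (lam : ℝ) : Continuous (expSurvival lam) := by
  unfold expSurvival; fun_prop

theorem antitone_expSurvival {lam : ℝ} (hlam : 0 ≤ lam) : Antitone (expSurvival lam) :=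
  fun x y hxy => by unfold expSurvival; gcongr

theorem expSurvival_of_nonneg (lam : ℝ) {x : ℝ} (hx : 0 ≤ x) :
    expSurvival lam x = exp (-(lam * x)) := by
  rw [expSurvival, max_eq_left hx]

theorem expSurvival_of_nonpos (lam : ℝ) {x : ℝ} (hx : x ≤ 0) : expSurvival lam x = 1 := by
  rw [expSurvival, max_eq_right hx, mul_zero, neg_zero, exp_zero]

theorem cdf_expMeasure_eq_one_sub_expSurvival {lam : ℝ} (hlam : 0 < lam) (x : ℝ) :
    cdf (expMeasure lam) x = 1 - expSurvival lam x := by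
  rw [cdf_expMeasure_eq hlam]
  split_ifs with hx
  · rw [expSurvival_of_nonneg lam hx]
  · rw [expSurvival_of_nonpos lam (not_le.mp hx).le, sub_self]

instance ProbabilityTheory.nullSingletonClass_expMeasure (lam : ℝ) :
    NullSingletonClass (expMeasure lam) :=
  inferInstanceAs (NullSingletonClass (volume.withDensity (gammaPDF 1 lam)))

theorem expMeasure_Ico {lam : ℝ} (hlam : 0 < lam) (a b : ℝ) :
    expMeasure lam (Ico a b) = ENNReal.ofReal (expSurvival lam a - expSurvival lam b) := by
  have := isProbabilityMeasure_expMeasure hlam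
  rw [measure_congr Ico_ae_eq_Ioc, ← measure_cdf (expMeasure lam), StieltjesFunction.measure_Ioc,
    cdf_expMeasure_eq_one_sub_expSurvival hlam, cdf_expMeasure_eq_one_sub_expSurvival hlam,
    sub_sub_sub_cancel_left]

theorem integral_exp_neg_mul_sub {lam : ℝ} (hlam : lam ≠ 0) (a τ : ℝ) :
    ∫ z in 0..τ, exp (-(lam * (a - z))) = (exp (-(lam * (a - τ))) - exp (-(lam * a))) / lam := by
  have hderiv (z : ℝ) :
      HasDerivAt (fun z => exp (-(lam * (a - z))) / lam) (exp (-(lam * (a - z)))) z :=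
    ((((hasDerivAt_id z).const_sub a).const_mul lam).fun_neg).exp.div_const lam |>.congr_deriv
      (by field_simp; simp)
  rw [intervalIntegral.integral_eq_sub_of_hasDerivAt (fun z _ => hderiv z)
    (Continuous.intervalIntegrable (by fun_prop) _ _)]
  simp [sub_div]

theorem integral_expSurvival_neg_sub {lam τ : ℝ} (hlam : lam ≠ 0) (hτ : 0 ≤ τ) :
    ∫ z in 0..τ, (expSurvival lam (-z) - expSurvival lam (τ - z))
      = τ - (1 - exp (-(lam * τ))) / lam := by
  have hint : EqOn (fun z => expSurvival lam (-z) - expSurvival lam (τ - z))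
      (fun z => 1 - exp (-(lam * (τ - z)))) (uIcc 0 τ) := by
    intro z hz
    rw [uIcc_of_le hτ] at hz
    dsimp only
    rw [expSurvival_of_nonpos lam (by linarith [hz.1]),
      expSurvival_of_nonneg lam (by linarith [hz.2])]
  rw [intervalIntegral.integral_congr hint, intervalIntegral.integral_sub intervalIntegrable_const
    (Continuous.intervalIntegrable (by fun_prop) _ _), integral_exp_neg_mul_sub hlam]
  simp

theorem integral_expSurvival_sub_of_le {lam τ c : ℝ} (hlam : lam ≠ 0) (hτ : 0 ≤ τ) (hc : τ ≤ c) :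
    ∫ z in 0..τ, (expSurvival lam (c - z) - expSurvival lam (c + τ - z))
      = exp (-(lam * c)) * ((1 - exp (-(lam * τ))) * (exp (lam * τ) - 1) / lam) := by
  have hint : EqOn (fun z => expSurvival lam (c - z) - expSurvival lam (c + τ - z))
      (fun z => exp (-(lam * (c - z))) - exp (-(lam * (c + τ - z)))) (uIcc 0 τ) := by
    intro z hz
    rw [uIcc_of_le hτ] at hz
    dsimp only
    rw [expSurvival_of_nonneg lam (by linarith [hz.2]),
      expSurvival_of_nonneg lam (by linarith [hz.2])]
  rw [intervalIntegral.integral_congr hint,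
    intervalIntegral.integral_sub (Continuous.intervalIntegrable (by fun_prop) _ _)
      (Continuous.intervalIntegrable (by fun_prop) _ _),
    integral_exp_neg_mul_sub hlam, integral_exp_neg_mul_sub hlam]
  have h1 : exp (-(lam * (c - τ))) = exp (-(lam * c)) * exp (lam * τ) := by
    rw [← exp_add]; ring_nf
  have h2 : exp (-(lam * (c + τ))) = exp (-(lam * c)) * exp (-(lam * τ)) := by
    rw [← exp_add]; ring_nf
  have h3 : exp (lam * τ) * exp (-(lam * τ)) = 1 := by rw [← exp_add]; simp
  rw [add_sub_cancel_right, h1, h2]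
  field_simp
  linear_combination h3

theorem MeasureTheory.Measure.conv_apply {M : Type*} [AddMonoid M] [MeasurableSpace M]
    [MeasurableAdd₂ M] (ν ρ : Measure M) [SFinite ρ] {A : Set M} (hA : MeasurableSet A) :
    (ν ∗ ρ) A = ∫⁻ x, ρ ((x + ·) ⁻¹' A) ∂ν := by
  rw [Measure.conv, Measure.map_apply measurable_add hA, Measure.prod_apply (measurable_add hA)]
  rfl

theorem toReal_measure_add_mem_Ico {Ω : Type*} [MeasurableSpace Ω] {μ : Measure Ω}
    [IsFiniteMeasure μ] {τ lam : ℝ} (hτ : 0 < τ) (hlam : 0 < lam) {Z S : Ω → ℝ}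
    (hZ : Measurable Z) (hS : Measurable S)
    (hZunif : Measure.map Z μ = (ENNReal.ofReal τ)⁻¹ • volume.restrict (Icc 0 τ))
    (hSexp : Measure.map S μ = expMeasure lam) (hindep : IndepFun Z S μ) {a b : ℝ} (hab : a ≤ b) :
    (μ {ω | a ≤ Z ω + S ω ∧ Z ω + S ω < b}).toReal
      = τ⁻¹ * ∫ z in 0..τ, (expSurvival lam (a - z) - expSurvival lam (b - z)) := by
  have := isProbabilityMeasure_expMeasure hlam
  have hset : {ω | a ≤ Z ω + S ω ∧ Z ω + S ω < b} = (Z + S) ⁻¹' Ico a b := rfl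
  have hnonneg (z : ℝ) : 0 ≤ expSurvival lam (a - z) - expSurvival lam (b - z) :=
    sub_nonneg.mpr (antitone_expSurvival hlam.le (by linarith))
  rw [hset, ← Measure.map_apply (hZ.add hS) measurableSet_Ico,
    hindep.map_add_eq_map_conv_map hZ hS, hZunif, hSexp,
    Measure.conv_apply _ _ measurableSet_Ico, lintegral_smul_measure]
  simp_rw [preimage_const_add_Ico, expMeasure_Ico hlam]
  rw [← ofReal_integral_eq_lintegral_ofReal, integral_Icc_eq_integral_Ioc,
    ← intervalIntegral.integral_of_le hτ.le, smul_eq_mul, ENNReal.toReal_mul, ENNReal.toReal_inv,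
    ENNReal.toReal_ofReal hτ.le, ENNReal.toReal_ofReal]
  · exact intervalIntegral.integral_nonneg hτ.le fun z _ => hnonneg z
  · exact Continuous.integrableOn_Icc (by fun_prop)
  · exact ae_of_all _ hnonneg

theorem tsum_integral_expSurvival_sub {τ T lam : ℝ} (hτ : 0 < τ) (hτT : τ < T) (hlam : 0 < lam) :
    ∑' n : ℕ, τ⁻¹ * ∫ z in 0..τ, (expSurvival lam (n * T - z) - expSurvival lam (n * T + τ - z))
      = (exp (-(lam * τ)) + lam * τ - 1 +
          exp (-(lam * τ)) * (exp (lam * τ) - 1) ^ 2 / (exp (lam * T) - 1)) / (lam * τ) := by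
  set r := exp (-(lam * T)) with hr
  set K := (1 - exp (-(lam * τ))) * (exp (lam * τ) - 1) / lam
  have hshift (n : ℕ) : τ⁻¹ * ∫ z in 0..τ, (expSurvival lam (((n + 1 : ℕ) : ℝ) * T - z)
      - expSurvival lam (((n + 1 : ℕ) : ℝ) * T + τ - z)) = τ⁻¹ * K * r * r ^ n := by
    have hc : τ ≤ ((n + 1 : ℕ) : ℝ) * T := by
      push_cast; nlinarith [(n.cast_nonneg : (0 : ℝ) ≤ n)]
    have hpow : exp (-(lam * (((n + 1 : ℕ) : ℝ) * T))) = r * r ^ n := by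
      rw [← pow_succ', hr, ← exp_nat_mul]; ring_nf
    rw [integral_expSurvival_sub_of_le hlam.ne' hτ.le hc, hpow]
    ring
  have hr0 : 0 ≤ r := (exp_pos _).le
  have hr1 : r < 1 := exp_lt_one_iff.mpr (by nlinarith)
  rw [tsum_eq_zero_add' ?summable]
  case summable =>
    simpa only [hshift] using (summable_geometric_of_lt_one hr0 hr1).mul_left (τ⁻¹ * K * r)
  simp only [hshift, Nat.cast_zero, zero_mul, zero_sub, zero_add]
  rw [integral_expSurvival_neg_sub hlam.ne' hτ.le, tsum_mul_left,
    tsum_geometric_of_lt_one hr0 hr1]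
  have hT : exp (lam * T) - 1 ≠ 0 := (sub_pos.mpr (one_lt_exp_iff.mpr (by nlinarith))).ne'
  have hr1' : 1 - r ≠ 0 := (sub_pos.mpr hr1).ne'
  simp only [K, hr, exp_neg] at hr1' ⊢
  field_simp
  ring

/-- Closed form for `g` in the exponential case: if `Z ~ Unif(0, τ)` and
`S ~ Exp(lam)` are independent, then the total probability that `Z + S` lands in some
ON interval `[nT, nT + τ)` (summed over `n ≥ 0`) equals
`(e^{-lam τ} + lam τ - 1 + e^{-lam τ}(e^{lam τ} - 1)²/(e^{lam T} - 1)) / (lam τ)`. -/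
theorem stmt_5 {Ω : Type*} [MeasurableSpace Ω] (μ : Measure Ω) [IsProbabilityMeasure μ]
    (τ T lam : ℝ) (hτ : 0 < τ) (hτT : τ < T) (hlam : 0 < lam)
    (Z S : Ω → ℝ) (hZmeas : Measurable Z) (hSmeas : Measurable S)
    (hZunif : Measure.map Z μ = (ENNReal.ofReal τ)⁻¹ • volume.restrict (Set.Icc 0 τ))
    (hSexp : Measure.map S μ = expMeasure lam)
    (hindep : IndepFun Z S μ) :
    ∑' n : ℕ, (μ {ω | (n : ℝ) * T ≤ Z ω + S ω ∧ Z ω + S ω < (n : ℝ) * T + τ}).toReal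
      = (Real.exp (-(lam * τ)) + lam * τ - 1 +
          Real.exp (-(lam * τ)) * (Real.exp (lam * τ) - 1) ^ 2 /
            (Real.exp (lam * T) - 1)) / (lam * τ) := by
  have hterm (n : ℕ) := toReal_measure_add_mem_Ico hτ hlam hZmeas hSmeas hZunif hSexp hindep
    (le_add_of_nonneg_right hτ.le : (n : ℝ) * T ≤ n * T + τ)
  rw [tsum_congr hterm]
  exact tsum_integral_expSurvival_sub hτ hτT hlam
end

section
/- Let α > 0 and b > 0. Let (S_i)_{i≥1} be i.i.d. nonnegative random variables whose tail satisfies x^α · P(S_1 > x) → b^α as x → ∞, and let N have the modified geometric distribution with parameters (g,p) with 0 ≤ g < 1 and 0 < p ≤ 1, independent of the sequence (S_i). Then the random sum S̃ = Σ_{i=1}^{N} S_i satisfies x^α · P(S̃ > x) → E[N] · b^α as x → ∞; in particular the CCDF of S̃ decays as a Pareto tail with the same exponent α. -/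
/-!
One big jump: for independent nonnegative `X`, `Y` with `x ^ α P(· > x)` converging,
`P(X + Y > x)` is `P(X > x) + P(Y > x)` up to `o(x ^ (-α))`, because a large sum needs one summand
beyond `(1 - ε) x` or both beyond `ε x`, and the latter costs a product of two tails. By induction
`x ^ α P(S₁ + ⋯ + Sₖ > x) → k b ^ α`. Conditioning on the independent `N` gives
`x ^ α P(S̃ > x) = ∑ₖ P(N = k) x ^ α P(S₁ + ⋯ + Sₖ > x)`; the union bound dominates the `k`-th term
by `M k ^ (α + 1) P(N = k)` uniformly in `x`, where `M = sup_y y ^ α P(S₁ > y)`, which is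
summable since `N` has geometric tails, so dominated convergence gives the limit
`∑ₖ P(N = k) k b ^ α = E[N] b ^ α`.
-/

open MeasureTheory ProbabilityTheory Filter Set
open scoped Topology

lemma tendsto_zero_of_tendsto_rpow_mul {α A : ℝ} (hα : 0 < α) {F : ℝ → ℝ}
    (h : Tendsto (fun x => x ^ α * F x) atTop (𝓝 A)) : Tendsto F atTop (𝓝 0) := by
  have h0 := h.mul (tendsto_rpow_neg_atTop hα)
  rw [mul_zero] at h0
  refine h0.congr' ?_
  filter_upwards [eventually_gt_atTop 0] with x hx
  rw [mul_right_comm, ← Real.rpow_add hx, add_neg_cancel, Real.rpow_zero, one_mul]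

lemma tendsto_rpow_mul_comp_const_mul {α A c : ℝ} (hc : 0 < c) {F : ℝ → ℝ}
    (h : Tendsto (fun x => x ^ α * F x) atTop (𝓝 A)) :
    Tendsto (fun x => x ^ α * F (c * x)) atTop (𝓝 (c ^ (-α) * A)) := by
  refine ((h.comp (tendsto_id.const_mul_atTop hc)).const_mul (c ^ (-α))).congr' ?_
  filter_upwards [eventually_ge_atTop 0] with x hx
  simp only [Function.comp_apply, id_eq]
  rw [Real.mul_rpow hc.le hx, ← mul_assoc, ← mul_assoc, ← Real.rpow_add hc, neg_add_cancel,
    Real.rpow_zero, one_mul]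

lemma natCast_rpow_le_pow_ceil (k : ℕ) {s : ℝ} (hs : 0 < s) :
    (k : ℝ) ^ s ≤ (k : ℝ) ^ ⌈s⌉₊ := by
  rcases k.eq_zero_or_pos with rfl | hk
  · rw [Nat.cast_zero, Real.zero_rpow hs.ne']
    positivity
  · rw [← Real.rpow_natCast]
    exact Real.rpow_le_rpow_of_exponent_le (by exact_mod_cast hk) (Nat.le_ceil s)

lemma summable_rpow_mul_of_le_geometric {q : ℕ → ℝ} {C r s : ℝ} (hq0 : ∀ k, 0 ≤ q k)
    (hq : ∀ k, q k ≤ C * r ^ k) (hr0 : 0 ≤ r) (hr1 : r < 1) (hs : 0 < s) :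
    Summable fun k : ℕ => (k : ℝ) ^ s * q k := by
  have hgeom := summable_pow_mul_geometric_of_norm_lt_one ⌈s⌉₊ (by rwa [Real.norm_of_nonneg hr0])
  refine .of_nonneg_of_le (fun k => mul_nonneg (by positivity) (hq0 k)) (fun k => ?_)
    (hgeom.mul_left C)
  calc (k : ℝ) ^ s * q k ≤ (k : ℝ) ^ ⌈s⌉₊ * (C * r ^ k) :=
        mul_le_mul (natCast_rpow_le_pow_ceil k hs) (hq k) (hq0 k) (by positivity)
    _ = C * ((k : ℝ) ^ ⌈s⌉₊ * r ^ k) := by ring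

namespace ProbabilityTheory

variable {Ω : Type*} [MeasurableSpace Ω] {μ : Measure Ω}

def ccdf (μ : Measure Ω) (X : Ω → ℝ) (x : ℝ) : ℝ := μ.real {ω | X ω > x}

def HasParetoTail (μ : Measure Ω) (X : Ω → ℝ) (α c : ℝ) : Prop :=
  Tendsto (fun x => x ^ α * ccdf μ X x) atTop (𝓝 c)

lemma ccdf_nonneg (X : Ω → ℝ) (x : ℝ) : 0 ≤ ccdf μ X x := measureReal_nonneg

lemma ccdf_le_one [IsProbabilityMeasure μ] (X : Ω → ℝ) (x : ℝ) : ccdf μ X x ≤ 1 :=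
  measureReal_le_one

lemma ccdf_eq_zero_of_le {X : Ω → ℝ} {x : ℝ} (h : ∀ ω, X ω ≤ x) : ccdf μ X x = 0 := by
  simp [ccdf, not_lt.2 (h _)]

lemma IdentDistrib.ccdf_eq {X Y : Ω → ℝ} (h : IdentDistrib X Y μ μ) : ccdf μ X = ccdf μ Y :=
  funext fun _ => congrArg ENNReal.toReal (h.measure_mem_eq measurableSet_Ioi)

lemma IndepFun.measureReal_inter_gt {X Y : Ω → ℝ} (h : IndepFun X Y μ) (x y : ℝ) :
    μ.real ({ω | X ω > x} ∩ {ω | Y ω > y}) = ccdf μ X x * ccdf μ Y y := by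
  rw [ccdf, ccdf, measureReal_def, measureReal_def, measureReal_def, ← ENNReal.toReal_mul]
  exact congrArg ENNReal.toReal
    (h.measure_inter_preimage_eq_mul (Ioi x) (Ioi y) measurableSet_Ioi measurableSet_Ioi)

section TwoSummands

variable [IsFiniteMeasure μ] {X Y : Ω → ℝ}

lemma ccdf_add_ge (hY : Measurable Y) (hX0 : ∀ ω, 0 ≤ X ω) (hY0 : ∀ ω, 0 ≤ Y ω)
    (hXY : IndepFun X Y μ) (x : ℝ) :
    ccdf μ X x + ccdf μ Y x - ccdf μ X x * ccdf μ Y x ≤ ccdf μ (X + Y) x := by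
  have hsub : {ω | X ω > x} ∪ {ω | Y ω > x} ⊆ {ω | (X + Y) ω > x} := by
    rintro ω (h | h) <;> simp only [mem_ofPred_eq, Pi.add_apply] at h ⊢
    · linarith [hY0 ω]
    · linarith [hX0 ω]
  have h := measureReal_union_add_inter (μ := μ) (s := {ω | X ω > x})
    (t := {ω | Y ω > x}) (measurableSet_lt measurable_const hY)
  rw [hXY.measureReal_inter_gt] at h
  unfold ccdf at h ⊢
  linarith [measureReal_mono (μ := μ) hsub]

lemma ccdf_add_le (hXY : IndepFun X Y μ) (ε x : ℝ) :
    ccdf μ (X + Y) x ≤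
      ccdf μ X ((1 - ε) * x) + ccdf μ Y ((1 - ε) * x) +
        ccdf μ X (ε * x) * ccdf μ Y (ε * x) := by
  have hsub : {ω | (X + Y) ω > x} ⊆
      ({ω | X ω > (1 - ε) * x} ∪ {ω | Y ω > (1 - ε) * x}) ∪
        ({ω | X ω > ε * x} ∩ {ω | Y ω > ε * x}) := by
    intro ω hω
    simp only [mem_ofPred_eq, Pi.add_apply, mem_union, mem_inter_iff] at hω ⊢
    by_contra! h
    linarith [h.1.1, h.1.2, h.2 (by linarith [h.1.2])]
  rw [← hXY.measureReal_inter_gt]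
  exact (measureReal_mono hsub).trans
    ((measureReal_union_le _ _).trans (by gcongr; exact measureReal_union_le _ _))

end TwoSummands

namespace HasParetoTail

variable {X Y : Ω → ℝ} {α A B : ℝ}

lemma tendsto_ccdf_zero (hα : 0 < α) (h : HasParetoTail μ X α A) :
    Tendsto (ccdf μ X) atTop (𝓝 0) :=
  tendsto_zero_of_tendsto_rpow_mul hα h

lemma exists_bound [IsProbabilityMeasure μ] (hα : 0 ≤ α) (h : HasParetoTail μ X α A) :
    ∃ M, ∀ x > 0, x ^ α * ccdf μ X x ≤ M := by
  obtain ⟨x₀, hx₀⟩ := eventually_atTop.1 (h.eventually (eventually_le_nhds (lt_add_one A)))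
  refine ⟨max (x₀ ^ α) (A + 1), fun x hx => ?_⟩
  rcases le_total x x₀ with hxx | hxx
  · calc x ^ α * ccdf μ X x ≤ x₀ ^ α * 1 :=
          mul_le_mul (Real.rpow_le_rpow hx.le hxx hα) (ccdf_le_one X x) (ccdf_nonneg X x)
            (Real.rpow_nonneg (hx.le.trans hxx) α)
      _ ≤ _ := by rw [mul_one]; exact le_max_left _ _
  · exact (hx₀ x hxx).trans (le_max_right _ _)

theorem add [IsProbabilityMeasure μ] (hα : 0 < α) (hYm : Measurable Y) (hX0 : ∀ ω, 0 ≤ X ω)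
    (hY0 : ∀ ω, 0 ≤ Y ω) (hXY : IndepFun X Y μ) (hX : HasParetoTail μ X α A)
    (hY : HasParetoTail μ Y α B) : HasParetoTail μ (X + Y) α (A + B) := by
  have hY0' := hY.tendsto_ccdf_zero hα
  have hlower : Tendsto (fun x => x ^ α * (ccdf μ X x + ccdf μ Y x - ccdf μ X x * ccdf μ Y x))
      atTop (𝓝 (A + B)) := by
    rw [show A + B = A + B - A * 0 by ring]
    exact ((Tendsto.add hX hY).sub (Tendsto.mul hX hY0')).congr fun x => by ring
  have hupper : ∀ ε ∈ Ioo (0 : ℝ) 1, Tendsto (fun x => x ^ α * (ccdf μ X ((1 - ε) * x) +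
      ccdf μ Y ((1 - ε) * x) + ccdf μ X (ε * x) * ccdf μ Y (ε * x)))
      atTop (𝓝 ((1 - ε) ^ (-α) * (A + B))) := by
    rintro ε ⟨hε0, hε1⟩
    have h1ε : 0 < 1 - ε := sub_pos.2 hε1
    rw [show (1 - ε) ^ (-α) * (A + B) =
      (1 - ε) ^ (-α) * A + (1 - ε) ^ (-α) * B + ε ^ (-α) * A * 0 by ring]
    refine (((tendsto_rpow_mul_comp_const_mul h1ε hX).add
      (tendsto_rpow_mul_comp_const_mul h1ε hY)).add ((tendsto_rpow_mul_comp_const_mul hε0 hX).mul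
        (hY0'.comp (tendsto_id.const_mul_atTop hε0)))).congr fun x => ?_
    simp only [Function.comp_apply, id_eq]
    ring
  have hε : Tendsto (fun ε : ℝ => (1 - ε) ^ (-α) * (A + B)) (𝓝[>] 0) (𝓝 (A + B)) := by
    have h1 : Tendsto (fun ε : ℝ => 1 - ε) (𝓝[>] 0) (𝓝 1) :=
      ((continuous_sub_left 1).tendsto' 0 1 (sub_zero 1)).mono_left nhdsWithin_le_nhds
    simpa using (h1.rpow_const (Or.inl one_ne_zero)).mul_const (A + B)
  rw [HasParetoTail, tendsto_order]
  refine ⟨fun a ha => ?_, fun a ha => ?_⟩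
  · filter_upwards [hlower.eventually (eventually_gt_nhds ha), eventually_gt_atTop 0]
      with x hlt hx
    exact hlt.trans_le (mul_le_mul_of_nonneg_left (ccdf_add_ge hYm hX0 hY0 hXY x)
      (Real.rpow_nonneg hx.le α))
  · obtain ⟨ε, hεa, hε1⟩ :=
      ((hε.eventually (eventually_lt_nhds ha)).and (Ioo_mem_nhdsGT one_pos)).exists
    filter_upwards [(hupper ε hε1).eventually (eventually_lt_nhds hεa), eventually_gt_atTop 0]
      with x hlt hx
    exact (mul_le_mul_of_nonneg_left (ccdf_add_le hXY ε x) (Real.rpow_nonneg hx.le α)).trans_lt hlt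

end HasParetoTail

lemma ccdf_sum_le [IsFiniteMeasure μ] {ι : Type*} {s : Finset ι} (hs : s.Nonempty)
    (X : ι → Ω → ℝ) (x : ℝ) :
    ccdf μ (∑ i ∈ s, X i) x ≤ ∑ i ∈ s, ccdf μ (X i) (x / s.card) := by
  have hsub : {ω | (∑ i ∈ s, X i) ω > x} ⊆ ⋃ i ∈ s, {ω | X i ω > x / s.card} := by
    intro ω hω
    have hlt : ∑ _i ∈ s, x / s.card < ∑ i ∈ s, X i ω := by
      rw [Finset.sum_const, nsmul_eq_mul, mul_div_cancel₀ _ (by exact_mod_cast hs.card_pos.ne')]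
      simpa [Finset.sum_apply] using hω
    obtain ⟨i, hi, hlt⟩ := Finset.exists_lt_of_sum_lt hlt
    exact mem_biUnion hi hlt
  exact (measureReal_mono hsub (measure_ne_top _ _)).trans (measureReal_biUnion_finset_le _ _)

section IIDSums

variable [IsProbabilityMeasure μ] {S : ℕ → Ω → ℝ} {α A : ℝ}

theorem HasParetoTail.sum_Icc (hα : 0 < α) (hSmeas : ∀ i, Measurable (S i))
    (hS0 : ∀ i ω, 0 ≤ S i ω) (hSindep : iIndepFun S μ)
    (hSident : ∀ i, 1 ≤ i → IdentDistrib (S i) (S 1) μ μ) (h : HasParetoTail μ (S 1) α A)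
    (n : ℕ) : HasParetoTail μ (∑ i ∈ Finset.Icc 1 n, S i) α (n * A) := by
  induction n with
  | zero =>
    refine tendsto_const_nhds.congr' ?_
    filter_upwards [eventually_ge_atTop 0] with x hx
    simp [ccdf_eq_zero_of_le (μ := μ) (X := 0) fun _ => hx]
  | succ n ih =>
    have hSn : HasParetoTail μ (S (n + 1)) α A := by
      rwa [HasParetoTail, (hSident (n + 1) n.succ_pos).ccdf_eq]
    have hind : IndepFun (∑ i ∈ Finset.Icc 1 n, S i) (S (n + 1)) μ :=
      hSindep.indepFun_finsetSum_of_notMem hSmeas (by simp)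
    have := ih.add hα (hSmeas _) (fun ω => ?_) (hS0 _) hind hSn
    · rw [Finset.sum_Icc_succ_top (by omega), Nat.cast_succ, add_one_mul]
      exact this
    · simpa only [Finset.sum_apply] using Finset.sum_nonneg fun i _ => hS0 i ω

lemma rpow_mul_ccdf_sum_Icc_le (hα : 0 < α) (hSident : ∀ i, 1 ≤ i → IdentDistrib (S i) (S 1) μ μ)
    {M : ℝ} (hM : ∀ y > 0, y ^ α * ccdf μ (S 1) y ≤ M) (k : ℕ) {x : ℝ} (hx : 0 < x) :
    x ^ α * ccdf μ (∑ i ∈ Finset.Icc 1 k, S i) x ≤ M * k ^ (α + 1) := by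
  rcases k.eq_zero_or_pos with rfl | hk
  · simp [ccdf_eq_zero_of_le (μ := μ) (X := 0) fun _ => hx.le,
      Real.zero_rpow (by positivity : α + 1 ≠ 0)]
  have hk' : (0 : ℝ) < k := by exact_mod_cast hk
  have hsum : ccdf μ (∑ i ∈ Finset.Icc 1 k, S i) x ≤ k * ccdf μ (S 1) (x / k) := by
    calc ccdf μ (∑ i ∈ Finset.Icc 1 k, S i) x
        ≤ ∑ i ∈ Finset.Icc 1 k, ccdf μ (S i) (x / (Finset.Icc 1 k).card) :=
          ccdf_sum_le (Finset.nonempty_Icc.2 hk) S x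
      _ = k * ccdf μ (S 1) (x / k) := by
          rw [Finset.sum_congr rfl fun i hi =>
              congrFun (hSident i (Finset.mem_Icc.1 hi).1).ccdf_eq _,
            Finset.sum_const, Nat.card_Icc, Nat.add_sub_cancel, nsmul_eq_mul]
  calc x ^ α * ccdf μ (∑ i ∈ Finset.Icc 1 k, S i) x
      ≤ x ^ α * (k * ccdf μ (S 1) (x / k)) :=
        mul_le_mul_of_nonneg_left hsum (Real.rpow_nonneg hx.le α)
    _ = (k : ℝ) ^ (α + 1) * ((x / k) ^ α * ccdf μ (S 1) (x / k)) := by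
        rw [Real.div_rpow hx.le hk'.le, Real.rpow_add_one hk'.ne']
        field_simp
    _ ≤ (k : ℝ) ^ (α + 1) * M := mul_le_mul_of_nonneg_left (hM _ (div_pos hx hk')) (by positivity)
    _ = M * k ^ (α + 1) := mul_comm _ _

end IIDSums

lemma ccdf_comp_eq_tsum [IsFiniteMeasure μ] {Y : ℕ → Ω → ℝ} {N : Ω → ℕ} (hN : Measurable N)
    (hY : ∀ k, Measurable (Y k)) (hYN : ∀ k, IndepFun (Y k) N μ) (x : ℝ) :
    ccdf μ (fun ω => Y (N ω) ω) x = ∑' k, μ.real {ω | N ω = k} * ccdf μ (Y k) x := by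
  have hset : {ω | Y (N ω) ω > x} = ⋃ k, {ω | N ω = k} ∩ {ω | Y k ω > x} := by
    ext ω
    simp
  have hdisj : Pairwise (Function.onFun Disjoint fun k => {ω | N ω = k} ∩ {ω | Y k ω > x}) :=
    fun i j hij => disjoint_left.2 fun ω h1 h2 => hij (h1.1.symm.trans h2.1)
  have hmeas (k : ℕ) : MeasurableSet ({ω | N ω = k} ∩ {ω | Y k ω > x}) :=
    (hN (measurableSet_singleton k)).inter (measurableSet_lt measurable_const (hY k))
  rw [ccdf, measureReal_def, hset, measure_iUnion hdisj hmeas,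
    ENNReal.tsum_toReal_eq fun k => measure_ne_top μ _]
  refine tsum_congr fun k => ?_
  rw [ccdf, measureReal_def, measureReal_def, ← ENNReal.toReal_mul]
  exact congrArg ENNReal.toReal ((hYN k).symm.measure_inter_preimage_eq_mul {k} (Ioi x)
    (measurableSet_singleton k) measurableSet_Ioi)

lemma integral_natCast_eq_tsum [IsFiniteMeasure μ] {N : Ω → ℕ} (hN : Measurable N) :
    ∫ ω, (N ω : ℝ) ∂μ = ∑' k : ℕ, k * μ.real {ω | N ω = k} := by
  rw [integral_eq_lintegral_of_nonneg_ae (ae_of_all _ fun ω => Nat.cast_nonneg _)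
    (measurable_of_countable _ |>.comp hN).aestronglyMeasurable,
    ← lintegral_map (f := fun k : ℕ => ENNReal.ofReal k) (measurable_of_countable _) hN,
    lintegral_countable', ENNReal.tsum_toReal_eq fun k => by finiteness]
  refine tsum_congr fun k => ?_
  rw [Measure.map_apply hN (measurableSet_singleton k), ENNReal.toReal_mul,
    ENNReal.toReal_ofReal (Nat.cast_nonneg k)]
  rfl

theorem HasParetoTail.randomSum [IsProbabilityMeasure μ] {S : ℕ → Ω → ℝ} {α A : ℝ} (hα : 0 < α)
    (hSmeas : ∀ i, Measurable (S i)) (hS0 : ∀ i ω, 0 ≤ S i ω) (hSindep : iIndepFun S μ)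
    (hSident : ∀ i, 1 ≤ i → IdentDistrib (S i) (S 1) μ μ) (h : HasParetoTail μ (S 1) α A)
    {N : Ω → ℕ} (hN : Measurable N) (hSN : IndepFun (fun ω i => S i ω) N μ)
    (hmom : Summable fun k : ℕ => (k : ℝ) ^ (α + 1) * μ.real {ω | N ω = k}) :
    HasParetoTail μ (fun ω => ∑ i ∈ Finset.Icc 1 (N ω), S i ω) α
      ((∑' k : ℕ, k * μ.real {ω | N ω = k}) * A) := by
  have hT (k : ℕ) : Measurable (∑ i ∈ Finset.Icc 1 k, S i) :=
    Finset.sum_fn (Finset.Icc 1 k) S ▸ Finset.measurable_sum _ fun i _ => hSmeas i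
  have hTN (k : ℕ) : IndepFun (∑ i ∈ Finset.Icc 1 k, S i) N μ := by
    have hφ : Measurable fun v : ℕ → ℝ => ∑ i ∈ Finset.Icc 1 k, v i :=
      Finset.measurable_sum _ fun i _ => measurable_pi_apply i
    rw [Finset.sum_fn]
    exact hSN.comp hφ measurable_id
  have hdecomp (x : ℝ) : x ^ α * ccdf μ (fun ω => ∑ i ∈ Finset.Icc 1 (N ω), S i ω) x
      = ∑' k, x ^ α * (μ.real {ω | N ω = k} * ccdf μ (∑ i ∈ Finset.Icc 1 k, S i) x) := by
    rw [tsum_mul_left, ← ccdf_comp_eq_tsum hN hT hTN]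
    simp only [Finset.sum_apply]
  obtain ⟨M, hM⟩ := h.exists_bound hα.le
  rw [HasParetoTail, funext hdecomp, ← tsum_mul_right]
  refine tendsto_tsum_of_dominated_convergence (hmom.mul_left M) (fun k => ?_) ?_
  · convert (h.sum_Icc hα hSmeas hS0 hSindep hSident k).const_mul (μ.real {ω | N ω = k}) using 1
    · ext x
      ring
    · congr 1
      ring
  · filter_upwards [eventually_gt_atTop 0] with x hx k
    rw [Real.norm_of_nonneg (by positivity [ccdf_nonneg (μ := μ) (∑ i ∈ Finset.Icc 1 k, S i) x]),
      mul_left_comm]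
    calc μ.real {ω | N ω = k} * (x ^ α * ccdf μ (∑ i ∈ Finset.Icc 1 k, S i) x)
        ≤ μ.real {ω | N ω = k} * (M * k ^ (α + 1)) :=
          mul_le_mul_of_nonneg_left (rpow_mul_ccdf_sum_Icc_le hα hSident hM k hx) measureReal_nonneg
      _ = M * ((k : ℝ) ^ (α + 1) * μ.real {ω | N ω = k}) := by ring

/-- For `k ≥ 2`, `P(N = k) = P(N = 2) (1 - p) ^ (k - 2) ≤ (1 - p) ^ (k - 2)`; taking `r ≥ 1 / 2`
lets the constant `4` absorb the shift by two. -/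
lemma measureReal_eq_le_geometric [IsProbabilityMeasure μ] {N : Ω → ℕ} {g p : ℝ} (hp1 : p ≤ 1)
    (hNk : ∀ k : ℕ, 2 ≤ k → (μ {ω | N ω = k}).toReal = (1 - g) * (1 - p) ^ (k - 2) * p) (k : ℕ) :
    μ.real {ω | N ω = k} ≤ 4 * max (1 - p) (1 / 2) ^ k := by
  set r := max (1 - p) (1 / 2)
  have hr : 1 / 2 ≤ r := le_max_right _ _
  rcases lt_or_ge k 2 with hk | hk
  · have : 1 / 2 ≤ r ^ k := by
      interval_cases k
      · norm_num
      · rwa [pow_one]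
    linarith [measureReal_le_one (μ := μ) (s := {ω | N ω = k})]
  obtain ⟨j, rfl⟩ := Nat.exists_eq_add_of_le' hk
  have h2 : (1 - g) * p ≤ 1 := by
    simpa using (hNk 2 le_rfl).symm.trans_le (measureReal_le_one (μ := μ))
  have hpow : (1 - p) ^ j ≤ r ^ j := pow_le_pow_left₀ (by linarith) (le_max_left _ _) j
  calc μ.real {ω | N ω = j + 2} = (1 - g) * p * (1 - p) ^ j := by
        rw [measureReal_def, hNk _ hk, Nat.add_sub_cancel]
        ring
    _ ≤ 1 * r ^ j := mul_le_mul h2 hpow (by positivity) zero_le_one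
    _ ≤ 4 * r ^ 2 * r ^ j :=
        mul_le_mul_of_nonneg_right (by nlinarith) (pow_nonneg (by linarith) j)
    _ = 4 * r ^ (j + 2) := by ring

end ProbabilityTheory

theorem stmt_11_general {Ω : Type*} [MeasurableSpace Ω] (μ : Measure Ω) [IsProbabilityMeasure μ]
    (α b : ℝ) (hα : 0 < α)
    (S : ℕ → Ω → ℝ) (hSmeas : ∀ i, Measurable (S i)) (hSnonneg : ∀ i ω, 0 ≤ S i ω)
    (hSindep : iIndepFun S μ)
    (hSident : ∀ i, 1 ≤ i → IdentDistrib (S i) (S 1) μ μ)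
    (htail : Tendsto (fun x : ℝ => x ^ α * (μ {ω | S 1 ω > x}).toReal)
      atTop (nhds (b ^ α)))
    (g p : ℝ) (hp0 : 0 < p) (hp1 : p ≤ 1)
    (N : Ω → ℕ) (hNmeas : Measurable N)
    (hNk : ∀ k : ℕ, 2 ≤ k → (μ {ω | N ω = k}).toReal = (1 - g) * (1 - p) ^ (k - 2) * p)
    (hNindep : IndepFun (fun ω => (fun i => S i ω)) N μ) :
    Tendsto
      (fun x : ℝ => x ^ α * (μ {ω | (∑ i ∈ Finset.Icc 1 (N ω), S i ω) > x}).toReal)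
      atTop (nhds ((∫ ω, (N ω : ℝ) ∂μ) * b ^ α)) := by
  have hmom : Summable fun k : ℕ => (k : ℝ) ^ (α + 1) * μ.real {ω | N ω = k} :=
    summable_rpow_mul_of_le_geometric (fun _ => measureReal_nonneg)
      (measureReal_eq_le_geometric hp1 hNk) (by positivity)
      (max_lt (by linarith) (by norm_num)) (by positivity)
  rw [integral_natCast_eq_tsum hNmeas]
  exact HasParetoTail.randomSum hα hSmeas hSnonneg hSindep hSident htail hNmeas hNindep hmom

/-- Pareto tail of the measured intercontact time: if the i.i.d. nonnegative `(S i)`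
have a Pareto-like tail `x^α P(S > x) → b^α`, and `N` has the modified geometric
distribution with parameters `(g, p)` and is independent of the sequence, then the
random sum `S̃ = Σ_{i=1}^{N} S i` satisfies `x^α P(S̃ > x) → E[N] · b^α`, i.e. its CCDF
decays as a Pareto tail with the same exponent `α`. -/
theorem stmt_11 {Ω : Type*} [MeasurableSpace Ω] (μ : Measure Ω) [IsProbabilityMeasure μ]
    (α b : ℝ) (hα : 0 < α) (hb : 0 < b)
    (S : ℕ → Ω → ℝ) (hSmeas : ∀ i, Measurable (S i)) (hSnonneg : ∀ i ω, 0 ≤ S i ω)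
    (hSindep : iIndepFun S μ)
    (hSident : ∀ i, 1 ≤ i → IdentDistrib (S i) (S 1) μ μ)
    (htail : Tendsto (fun x : ℝ => x ^ α * (μ {ω | S 1 ω > x}).toReal)
      atTop (nhds (b ^ α)))
    (g p : ℝ) (hg0 : 0 ≤ g) (hg1 : g < 1) (hp0 : 0 < p) (hp1 : p ≤ 1)
    (N : Ω → ℕ) (hNmeas : Measurable N) (hNpos : ∀ ω, 1 ≤ N ω)
    (hN1 : (μ {ω | N ω = 1}).toReal = g)
    (hNk : ∀ k : ℕ, 2 ≤ k → (μ {ω | N ω = k}).toReal = (1 - g) * (1 - p) ^ (k - 2) * p)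
    (hNindep : IndepFun (fun ω => (fun i => S i ω)) N μ) :
    Tendsto
      (fun x : ℝ => x ^ α * (μ {ω | (∑ i ∈ Finset.Icc 1 (N ω), S i ω) > x}).toReal)
      atTop (nhds ((∫ ω, (N ω : ℝ) ∂μ) * b ^ α)) :=
  stmt_11_general μ α b hα S hSmeas hSnonneg hSindep hSident htail g p hp0 hp1 N hNmeas hNk hNindep
end

section
/- Let 0 < g < 1 and 0 < p ≤ 1, and define ω(g) = (3/2)(g − 1) + (1/2)√(9 − 10g + g²). Then (1 − g)(g − p + 1)/(1 − g + p)² > 1 if and only if p < ω(g). Equivalently, a random variable N with the modified geometric distribution with parameters (g,p) has squared coefficient of variation greater than 1 exactly when p < ω(g). -/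
/-- For `0 < g < 1` and `0 < p ≤ 1`, with `ω(g) = (3/2)(g - 1) + (1/2)√(9 - 10g + g²)`,
the squared coefficient of variation `(1-g)(g-p+1)/(1-g+p)²` of a modified geometric
random variable with parameters `(g, p)` exceeds `1` iff `p < ω(g)`. -/
theorem stmt_12 (g p : ℝ) (hg0 : 0 < g) (hg1 : g < 1) (hp0 : 0 < p) (hp1 : p ≤ 1) :
    (1 - g) * (g - p + 1) / (1 - g + p) ^ 2 > 1 ↔
      p < (3 / 2) * (g - 1) + (1 / 2) * Real.sqrt (9 - 10 * g + g ^ 2) := by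
  have hden : (0:ℝ) < (1 - g + p) ^ 2 := by nlinarith [sq_nonneg (1 - g + p)]
  rw [gt_iff_lt, lt_div_iff₀ hden, one_mul]
  have hx : (0:ℝ) ≤ 2 * p + 3 * (1 - g) := by linarith
  have key : 2 * p + 3 * (1 - g) < Real.sqrt (9 - 10 * g + g ^ 2) ↔
      (2 * p + 3 * (1 - g)) ^ 2 < 9 - 10 * g + g ^ 2 := Real.lt_sqrt hx
  constructor
  · intro h
    have h2 : 2 * p + 3 * (1 - g) < Real.sqrt (9 - 10 * g + g ^ 2) :=
      key.mpr (by nlinarith)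
    linarith
  · intro h
    have h2 : 2 * p + 3 * (1 - g) < Real.sqrt (9 - 10 * g + g ^ 2) := by linarith
    have := key.mp h2
    nlinarith
end

section
/- Let 0 ≤ g < 1, 0 < p ≤ 1, and let c ≥ 0 be a real number. Set E = (1 − g + p)/p and V = (1 − g)(g − p + 1)/(1 − g + p)². Then c/E + V > 1 if and only if c > ξ(g,p), where ξ(g,p) = 1 − 2g/p + 2/(1 − g + p). Equivalently, with cv_S² = c, the squared coefficient of variation cv_{S̃}² = cv_S²/E[N] + cv_N² of the measured intercontact time exceeds 1 exactly when cv_S² > ξ(g,p). -/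
/-- For `0 ≤ g < 1`, `0 < p ≤ 1` and `c ≥ 0`, with `E = (1-g+p)/p` (the mean of the
modified geometric `N`) and `V = (1-g)(g-p+1)/(1-g+p)²` (its squared coefficient of
variation), one has `c/E + V > 1` iff `c > ξ(g,p) = 1 - 2g/p + 2/(1-g+p)`.
That is, `cv_{S̃}² = cv_S²/E[N] + cv_N²` exceeds `1` exactly when `cv_S² > ξ(g,p)`. -/
theorem stmt_13 (g p c : ℝ) (hg0 : 0 ≤ g) (hg1 : g < 1) (hp0 : 0 < p) (hp1 : p ≤ 1)
    (hc : 0 ≤ c) :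
    c / ((1 - g + p) / p) + (1 - g) * (g - p + 1) / (1 - g + p) ^ 2 > 1 ↔
      c > 1 - 2 * g / p + 2 / (1 - g + p) := by
  have hD : 0 < 1 - g + p := by linarith
  rw [gt_iff_lt, gt_iff_lt, div_div_eq_mul_div]
  constructor <;> intro h
  · rw [← sub_pos] at h ⊢
    have h2 := mul_pos h (mul_pos hD hp0)
    field_simp at h2 ⊢
    nlinarith [h2, sq_nonneg (1-g+p)]
  · rw [← sub_pos] at h ⊢
    have h2 := mul_pos h (mul_pos hD hp0)
    field_simp at h2 ⊢
    nlinarith [h2, sq_nonneg (1-g+p)]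
end

section
/- For all real g and p with 0 ≤ g < 1 and 0 < p ≤ 1, one has ξ(g,p) < 3, where ξ(g,p) = 1 − 2g/p + 2/(1 − g + p). Consequently, if cv_S² ≥ 3 then cv_S²/E[N] + cv_N² > 1, i.e., when the original intercontact times are hyper-exponential with cv_S² > 3 the measured intercontact times are always hyper-exponential. -/
/-- For all `0 ≤ g < 1` and `0 < p ≤ 1`, `ξ(g,p) = 1 - 2g/p + 2/(1-g+p) < 3`.
Consequently, if `cv_S² ≥ 3` then
`cv_S²/E[N] + cv_N² = c/((1-g+p)/p) + (1-g)(g-p+1)/(1-g+p)² > 1`: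
hyper-exponential original intercontact times with `cv_S² > 3` always yield
hyper-exponential measured intercontact times. -/
theorem stmt_14 (g p : ℝ) (hg0 : 0 ≤ g) (hg1 : g < 1) (hp0 : 0 < p) (hp1 : p ≤ 1) :
    1 - 2 * g / p + 2 / (1 - g + p) < 3 ∧
      ∀ c : ℝ, 3 ≤ c →
        c / ((1 - g + p) / p) + (1 - g) * (g - p + 1) / (1 - g + p) ^ 2 > 1 := by
  have hd : (0:ℝ) < 1 - g + p := by linarith
  constructor
  · have hXnn : 0 ≤ 2 * g / p := by positivity
    have h2 : 2 * g / p * p = 2 * g := div_mul_cancel₀ _ hp0.ne'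
    have h1 : 2 * g / p * p ≤ 2 * g / p * (1 - g + p) :=
      mul_le_mul_of_nonneg_left (by linarith) hXnn
    have key : 2 / (1 - g + p) < 2 + 2 * g / p := by
      rw [div_lt_iff₀ hd]; nlinarith
    linarith
  · intro c hc
    rw [gt_iff_lt, div_div_eq_mul_div,
      div_add_div _ _ (ne_of_gt hd) (by positivity), lt_div_iff₀ (by positivity)]
    have hcp : 3 * p * (1 - g + p) ^ 2 ≤ c * p * (1 - g + p) ^ 2 := by
      have : 3 * p ≤ c * p := mul_le_mul_of_nonneg_right hc hp0.le
      nlinarith [sq_nonneg (1 - g + p)]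
    nlinarith [mul_pos hp0 hd, mul_nonneg hg0 (sub_nonneg.mpr hg1.le), mul_pos hd hd]
end

section
/- For all real g and p with 0 < g < 1 and 0 < p ≤ 1, one has ξ(g,p) < 1 if and only if p < g, and ξ(g,g) = 1, where ξ(g,p) = 1 − 2g/p + 2/(1 − g + p). Consequently, when g = p the measured intercontact time inherits the behaviour of the original intercontact time: cv_{S̃}² > 1 if and only if cv_S² > 1. -/
/-!
Clearing denominators, `1 - ξ(g,p) = 2(1-g)(g-p) / (p(1-g+p))`, whose sign is that of `g - p`.
For `N` modified geometric, `E[N] = (1-g+p)/p` and `cv_N² = (1-g)(g-p+1)/(1-g+p)²`, and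
`cv_{S̃}² - 1 = p/(1-g+p) · (cv_S² - ξ(g,p))`; at `g = p` the threshold `ξ(g,g)` is `1`.
-/

noncomputable section

namespace Intercontact

def xi (g p : ℝ) : ℝ := 1 - 2 * g / p + 2 / (1 - g + p)

/-- `cv_{S̃}² = cv_S² / E[N] + cv_N²`, where `cvS2 = cv_S²`. -/
def measuredCvSq (cvS2 g p : ℝ) : ℝ :=
  cvS2 / ((1 - g + p) / p) + (1 - g) * (g - p + 1) / (1 - g + p) ^ 2

variable {g p : ℝ}

theorem one_sub_xi (hp : p ≠ 0) (hq : 1 - g + p ≠ 0) :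
    1 - xi g p = 2 * (1 - g) * (g - p) / (p * (1 - g + p)) := by
  unfold xi
  field_simp
  ring

theorem xi_lt_one_iff (hg : g < 1) (hp : 0 < p) : xi g p < 1 ↔ p < g := by
  have hq : 0 < 1 - g + p := by linarith
  rw [← sub_pos, one_sub_xi hp.ne' hq.ne', div_pos_iff_of_pos_right (by positivity),
    mul_pos_iff_of_pos_left (by linarith), sub_pos]

theorem xi_self (hg : g ≠ 0) : xi g g = 1 := by
  unfold xi
  field_simp
  ring

theorem measuredCvSq_sub_one (c : ℝ) (hp : p ≠ 0) (hq : 1 - g + p ≠ 0) :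
    measuredCvSq c g p - 1 = p / (1 - g + p) * (c - xi g p) := by
  unfold measuredCvSq xi
  field_simp
  ring

theorem one_lt_measuredCvSq_iff (c : ℝ) (hg : g < 1) (hp : 0 < p) :
    1 < measuredCvSq c g p ↔ xi g p < c := by
  have hq : 0 < 1 - g + p := by linarith
  rw [← sub_pos, measuredCvSq_sub_one c hp.ne' hq.ne', mul_pos_iff_of_pos_left (by positivity),
    sub_pos]

end Intercontact

end

theorem stmt_15_general (g p : ℝ) (hg0 : 0 < g) (hg1 : g < 1) (hp0 : 0 < p) :
    (1 - 2 * g / p + 2 / (1 - g + p) < 1 ↔ p < g) ∧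
      (1 - 2 * g / g + 2 / (1 - g + g) = 1) ∧
      ∀ c : ℝ, 0 ≤ c →
        (c / ((1 - g + g) / g) + (1 - g) * (g - g + 1) / (1 - g + g) ^ 2 > 1 ↔ c > 1) := by
  refine ⟨Intercontact.xi_lt_one_iff hg1 hp0, Intercontact.xi_self hg0.ne', fun c _ => ?_⟩
  have h := Intercontact.one_lt_measuredCvSq_iff c hg1 hg0
  rwa [Intercontact.xi_self hg0.ne'] at h

/-- For `0 < g < 1` and `0 < p ≤ 1`: `ξ(g,p) = 1 - 2g/p + 2/(1-g+p) < 1` iff `p < g`,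
and `ξ(g,g) = 1`. Consequently, when `g = p` the measured intercontact time inherits
the behaviour of the original one: `cv_{S̃}² = cv_S²/E[N] + cv_N² > 1` iff `cv_S² > 1`. -/
theorem stmt_15 (g p : ℝ) (hg0 : 0 < g) (hg1 : g < 1) (hp0 : 0 < p) (hp1 : p ≤ 1) :
    (1 - 2 * g / p + 2 / (1 - g + p) < 1 ↔ p < g) ∧
      (1 - 2 * g / g + 2 / (1 - g + g) = 1) ∧
      ∀ c : ℝ, 0 ≤ c →
        (c / ((1 - g + g) / g) + (1 - g) * (g - g + 1) / (1 - g + g) ^ 2 > 1 ↔ c > 1) :=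
  stmt_15_general g p hg0 hg1 hp0
end

section
/- Let τ > 0 and let f : (0,∞) → [0,∞) be a measurable probability density with cumulative distribution function F(u) = ∫_0^u f(c) dc, and assume F(u) > 0 for every u ∈ (0, τ). Then the function c ↦ (1/τ) f(c) ∫_c^τ (1/F(u)) du on (0, τ) is itself a probability density, i.e., ∫_0^τ (1/τ) f(c) ( ∫_c^τ 1/F(u) du ) dc = 1. -/
/-!
Tonelli on the triangle `0 < c < u < τ` gives
`∫₀^τ f(c) ∫_c^τ 1/F(u) du dc = ∫₀^τ (1/F(u)) ∫₀^u f(c) dc du = ∫₀^τ 1 du = τ`.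
The computation is carried out in `ℝ≥0∞`, with `F` replaced by the primitive
`u ↦ ∫⁻_{(0,u)} f`: it is monotone, hence measurable, and agrees with `F` on `(0, τ)`.
-/

open MeasureTheory intervalIntegral Set
open scoped ENNReal

section Triangle

variable {α : Type*} [LinearOrder α] [TopologicalSpace α] [OrderClosedTopology α]
  [SecondCountableTopology α] [MeasurableSpace α] [OpensMeasurableSpace α]
  {μ : Measure α} [SFinite μ] {f g : α → ℝ≥0∞}

theorem lintegral_mul_setLIntegral_Ioi_swap (hf : Measurable f) (hg : Measurable g) :
    ∫⁻ c, f c * ∫⁻ u in Ioi c, g u ∂μ ∂μ = ∫⁻ u, (∫⁻ c in Iio u, f c ∂μ) * g u ∂μ := by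
  have hmeas : Measurable fun p : α × α => if p.1 < p.2 then f p.1 * g p.2 else 0 :=
    Measurable.ite (measurableSet_lt measurable_fst measurable_snd)
      ((hf.comp measurable_fst).mul (hg.comp measurable_snd)) measurable_const
  convert lintegral_lintegral_swap (f := fun c u => if c < u then f c * g u else 0)
    (μ := μ) (ν := μ) hmeas.aemeasurable using 3 with c u
  · rw [← lintegral_const_mul _ hg, ← lintegral_indicator measurableSet_Ioi]
    simp only [indicator_apply, mem_Ioi]
  · rw [← lintegral_mul_const _ hf, ← lintegral_indicator measurableSet_Iio]
    simp only [indicator_apply, mem_Iio]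

theorem setLIntegral_Ioo_mul_setLIntegral_Ioo_swap (hf : Measurable f) (hg : Measurable g)
    (a b : α) :
    ∫⁻ c in Ioo a b, f c * ∫⁻ u in Ioo c b, g u ∂μ ∂μ
      = ∫⁻ u in Ioo a b, (∫⁻ c in Ioo a u, f c ∂μ) * g u ∂μ := by
  convert lintegral_mul_setLIntegral_Ioi_swap (μ := μ.restrict (Ioo a b)) hf hg using 1
  · refine setLIntegral_congr_fun measurableSet_Ioo fun c hc => ?_
    rw [Measure.restrict_restrict measurableSet_Ioi, Ioi_inter_Ioo, max_eq_left hc.1.le]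
  · refine setLIntegral_congr_fun measurableSet_Ioo fun u hu => ?_
    rw [Measure.restrict_restrict measurableSet_Iio, Iio_inter_Ioo, min_eq_left hu.2.le]

end Triangle

theorem monotone_setLIntegral_Ioo {α : Type*} [Preorder α] [MeasurableSpace α]
    (μ : Measure α) (f : α → ℝ≥0∞) (a : α) :
    Monotone fun u => ∫⁻ t in Ioo a u, f t ∂μ := fun _ _ huv =>
  lintegral_mono_set (Ioo_subset_Ioo_right huv)

theorem setLIntegral_Ioo_mul_setLIntegral_inv_primitive {α : Type*} [LinearOrder α]
    [TopologicalSpace α] [OrderClosedTopology α] [SecondCountableTopology α] [MeasurableSpace α]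
    [BorelSpace α] {μ : Measure α} [SFinite μ] {f : α → ℝ≥0∞} (hf : Measurable f) {a b : α}
    (hpos : ∀ u ∈ Ioo a b, ∫⁻ t in Ioo a u, f t ∂μ ≠ 0)
    (hfin : ∀ u ∈ Ioo a b, ∫⁻ t in Ioo a u, f t ∂μ ≠ ∞) :
    ∫⁻ c in Ioo a b, f c * ∫⁻ u in Ioo c b, (∫⁻ t in Ioo a u, f t ∂μ)⁻¹ ∂μ ∂μ = μ (Ioo a b) := by
  rw [setLIntegral_Ioo_mul_setLIntegral_Ioo_swap (g := fun u => (∫⁻ t in Ioo a u, f t ∂μ)⁻¹) hf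
    (monotone_setLIntegral_Ioo μ f a).measurable.inv, ← setLIntegral_one]
  exact setLIntegral_congr_fun measurableSet_Ioo fun u hu =>
    ENNReal.mul_inv_cancel (hpos u hu) (hfin u hu)

theorem ofReal_intervalIntegral_eq_setLIntegral_Ioo {f : ℝ → ℝ} {a b : ℝ} (hab : a ≤ b)
    (hf : ∀ x, 0 ≤ f x) (h : ∫ x in a..b, f x ≠ 0) :
    ENNReal.ofReal (∫ x in a..b, f x) = ∫⁻ x in Ioo a b, ENNReal.ofReal (f x) := by
  rw [integral_of_le hab, setLIntegral_congr Ioo_ae_eq_Ioc,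
    ofReal_integral_eq_lintegral_ofReal (intervalIntegrable_of_integral_ne_zero h).1
      (Filter.Eventually.of_forall hf)]

theorem setIntegral_one_div_eq_toReal_setLIntegral_inv {α : Type*} [MeasurableSpace α]
    {μ : Measure α} {s : Set α} (hs : MeasurableSet s) {F : α → ℝ} {G : α → ℝ≥0∞}
    (hG : Measurable G) (hFG : ∀ u ∈ s, G u = ENNReal.ofReal (F u)) (hF : ∀ u ∈ s, 0 < F u) :
    ∫ u in s, 1 / F u ∂μ = (∫⁻ u in s, (G u)⁻¹ ∂μ).toReal := by
  rw [← integral_toReal (f := fun u => (G u)⁻¹) hG.inv.aemeasurable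
    (ae_restrict_of_forall_mem hs fun u hu =>
      ENNReal.inv_lt_top.2 (hFG u hu ▸ ENNReal.ofReal_pos.2 (hF u hu)))]
  refine setIntegral_congr_fun hs fun u hu => ?_
  rw [hFG u hu, ← ENNReal.ofReal_inv_of_pos (hF u hu),
    ENNReal.toReal_ofReal (inv_nonneg.2 (hF u hu).le), one_div]

theorem stmt_16_general (τ : ℝ) (hτ : 0 < τ)
    (f : ℝ → ℝ) (hfmeas : Measurable f) (hfnonneg : ∀ x, 0 ≤ f x)
    (F : ℝ → ℝ) (hF : ∀ u, F u = ∫ t in (0 : ℝ)..u, f t)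
    (hFpos : ∀ u ∈ Set.Ioo (0 : ℝ) τ, 0 < F u) :
    ∫ c in Set.Ioo (0 : ℝ) τ, (1 / τ) * f c * (∫ u in Set.Ioo c τ, 1 / F u) = 1 := by
  set G : ℝ → ℝ≥0∞ := fun u => ∫⁻ t in Ioo 0 u, ENNReal.ofReal (f t)
  set H : ℝ → ℝ≥0∞ := fun c => ∫⁻ u in Ioo c τ, (G u)⁻¹
  have hG : ∀ u ∈ Ioo 0 τ, G u = ENNReal.ofReal (F u) := fun u hu => by
    rw [hF u, ofReal_intervalIntegral_eq_setLIntegral_Ioo hu.1.le hfnonneg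
      (hF u ▸ (hFpos u hu).ne')]
  have hmass : ∫⁻ c in Ioo 0 τ, ENNReal.ofReal (f c) * H c = ENNReal.ofReal τ := by
    rw [setLIntegral_Ioo_mul_setLIntegral_inv_primitive hfmeas.ennreal_ofReal
      (fun u hu => (hG u hu).trans_ne (ENNReal.ofReal_pos.2 (hFpos u hu)).ne')
      (fun u hu => (hG u hu).trans_ne ENNReal.ofReal_ne_top), Real.volume_Ioo, sub_zero]
  have hinner : ∀ c ∈ Ioo 0 τ, ∫ u in Ioo c τ, 1 / F u = (H c).toReal := fun c hc =>
    setIntegral_one_div_eq_toReal_setLIntegral_inv measurableSet_Ioo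
      (monotone_setLIntegral_Ioo volume _ 0).measurable
      (fun u hu => hG u ⟨hc.1.trans hu.1, hu.2⟩) (fun u hu => hFpos u ⟨hc.1.trans hu.1, hu.2⟩)
  have hmeas : Measurable fun c => ENNReal.ofReal (f c) * H c :=
    hfmeas.ennreal_ofReal.mul
      (Antitone.measurable fun _ _ hcd => lintegral_mono_set (Ioo_subset_Ioo_left hcd))
  calc ∫ c in Ioo 0 τ, (1 / τ) * f c * (∫ u in Ioo c τ, 1 / F u)
      = ∫ c in Ioo 0 τ, (1 / τ) * (ENNReal.ofReal (f c) * H c).toReal :=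
        setIntegral_congr_fun measurableSet_Ioo fun c hc => by
          rw [hinner c hc, ENNReal.toReal_mul, ENNReal.toReal_ofReal (hfnonneg c), mul_assoc]
    _ = (1 / τ) * (∫⁻ c in Ioo 0 τ, ENNReal.ofReal (f c) * H c).toReal := by
        rw [MeasureTheory.integral_const_mul, integral_toReal hmeas.aemeasurable
          (ae_lt_top hmeas (hmass ▸ ENNReal.ofReal_ne_top))]
    _ = 1 := by rw [hmass, ENNReal.toReal_ofReal hτ.le, one_div_mul_cancel hτ.ne']

/-- The density of `C^short` integrates to one: if `f` is a probability density on
`(0, ∞)` with CDF `F u = ∫_0^u f`, and `F u > 0` on `(0, τ)`, then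
`c ↦ (1/τ) f(c) ∫_c^τ (1/F(u)) du` is a probability density on `(0, τ)`. -/
theorem stmt_16 (τ : ℝ) (hτ : 0 < τ)
    (f : ℝ → ℝ) (hfmeas : Measurable f) (hfnonneg : ∀ x, 0 ≤ f x)
    (hfdens : ∫ x in Set.Ioi (0 : ℝ), f x = 1)
    (F : ℝ → ℝ) (hF : ∀ u, F u = ∫ t in (0 : ℝ)..u, f t)
    (hFpos : ∀ u ∈ Set.Ioo (0 : ℝ) τ, 0 < F u) :
    ∫ c in Set.Ioo (0 : ℝ) τ, (1 / τ) * f c * (∫ u in Set.Ioo c τ, 1 / F u) = 1 :=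
  stmt_16_general τ hτ f hfmeas hfnonneg F hF hFpos
end
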